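/- Let D be a Steiner 2-design S(2,k,v) with a near parallel class. Then the 1-block intersection graph G_1 of D is not silver: for every maximum independent set I of G_1 (necessarily a near parallel class of size (v-1)/k), there is no proper (r+1)-coloring of G_1, where r = k(v-k)/(k-1), in which every vertex of I is rainbow. -/

import Mathlib

open Finset

variable {α : Type*}

/-- A Steiner 2-design `S(2,k,v)`: the point set has `v` points, every block has
`k` points, and every pair of distinct points lies in exactly one block. -/
def IsSteiner [Fintype α] [DecidableEq α] (v k : ℕ) (B : Finset (Finset α)) : Prop :=
  Fintype.card α = v ∧ (∀ b ∈ B, b.card = k) ∧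
    ∀ x y : α, x ≠ y → (B.filter fun b => x ∈ b ∧ y ∈ b).card = 1

/-- The `i`-block intersection graph: vertices are the blocks of `B`, two blocks
adjacent iff they intersect in exactly `i` points. -/
def BIG [DecidableEq α] (i : ℕ) (B : Finset (Finset α)) :
    SimpleGraph {b : Finset α // b ∈ B} where
  Adj b₁ b₂ := b₁ ≠ b₂ ∧ ((b₁ : Finset α) ∩ (b₂ : Finset α)).card = i
  symm := ⟨fun a b ⟨h1, h2⟩ => ⟨h1.symm, by rwa [Finset.inter_comm]⟩⟩
  loopless := ⟨fun a ⟨h, _⟩ => h rfl⟩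

instance [DecidableEq α] (i : ℕ) (B : Finset (Finset α)) :
    DecidableRel (BIG (α := α) i B).Adj := fun _ _ => inferInstanceAs (Decidable (_ ∧ _))

/-- `I` is a maximum independent set of `G`. -/
def IsMaxIndep {V : Type*} (G : SimpleGraph V) (I : Finset V) : Prop :=
  (∀ a ∈ I, ∀ b ∈ I, ¬ G.Adj a b) ∧
    ∀ J : Finset V, (∀ a ∈ J, ∀ b ∈ J, ¬ G.Adj a b) → J.card ≤ I.card

/-- A silver coloring of the `r`-regular graph `G` with respect to `I`: a proper
`(r+1)`-coloring under which every vertex of `I` is rainbow (all `r+1` colors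
appear on its closed neighborhood). -/
def SilverWith {V : Type*} (G : SimpleGraph V) (r : ℕ) (I : Finset V) : Prop :=
  ∃ c : V → Fin (r + 1), (∀ a b, G.Adj a b → c a ≠ c b) ∧
    ∀ x ∈ I, ∀ col : Fin (r + 1), ∃ y, (y = x ∨ G.Adj x y) ∧ c y = col

/-- `G` is silver: some silver coloring exists with respect to some maximum
independent set. -/
def IsSilver {V : Type*} (G : SimpleGraph V) (r : ℕ) : Prop :=
  ∃ I : Finset V, IsMaxIndep G I ∧ SilverWith G r I

/-- A near parallel class: pairwise disjoint blocks of `B` covering every point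
except exactly one. -/
def IsNearParallelClass [DecidableEq α] (B P : Finset (Finset α)) : Prop :=
  P ⊆ B ∧ (∀ b₁ ∈ P, ∀ b₂ ∈ P, b₁ ≠ b₂ → b₁ ∩ b₂ = ∅) ∧
    ∃ x : α, ∀ y : α, (∃ b ∈ P, y ∈ b) ↔ y ≠ x

/-!
Distinct blocks meet in at most one point, so an independent set of `G₁` is a set of pairwise
disjoint blocks; comparing sizes with the given near parallel class shows that a maximum
independent set `I` is itself a near parallel class, missing a point `x₀`. With
`s = (v-1)/(k-1)` blocks through each point, `G₁` is `k(s-1)`-regular, so if every block of `I`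
is rainbow then each colour class `S` meets each closed neighbourhood `N[b]`, `b ∈ I`, exactly
once. Counting the pairs `(b, y)` with `b ∈ I`, `y ∈ S ∩ N[b]` through the points of `y` gives
`k |S| = |I| + (k-1) |S ∩ I| + |S ∩ X|`, where `X` is the set of blocks through `x₀`.
These `s` blocks form a clique and get `s` distinct colours, and a colour missing from `I` has
`k ∣ |I| + [it is used on X]`. If `k ∣ |I|`, all `s` colours used on `X` occur on `I`; otherwise
all `k(s-1) + 1 - s` others do. Both numbers exceed `|I| = (v-1)/k`.
-/

namespace SimpleGraph

theorem IsClique.injOn_of_proper {V β : Type*} {G : SimpleGraph V} {K : Set V}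
    (hK : G.IsClique K) {c : V → β} (hc : ∀ a b, G.Adj a b → c a ≠ c b) : Set.InjOn c K :=
  fun _ ha _ hb hab => by_contra fun hne => hc _ _ (hK ha hb hne) hab

variable {V : Type*} [Fintype V] [DecidableEq V] {G : SimpleGraph V} [DecidableRel G.Adj]

theorem card_filter_closedNbhd_eq_one_of_rainbow {r : ℕ} {x : V} (hx : G.degree x = r)
    {c : V → Fin (r + 1)} (hrain : ∀ col, ∃ y, (y = x ∨ G.Adj x y) ∧ c y = col)
    (col : Fin (r + 1)) : #{y | (y = x ∨ G.Adj x y) ∧ c y = col} = 1 := by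
  set N : Finset V := {y | y = x ∨ G.Adj x y}
  have hN : #N = r + 1 := by
    have : N = insert x (G.neighborFinset x) := by ext; simp [N]
    rw [this, card_insert_of_notMem (by simp), card_neighborFinset_eq_degree, hx]
  have hinj : Set.InjOn c N :=
    injOn_of_surjOn_of_card_le c (t := univ) (fun _ _ => mem_coe.mpr (mem_univ _))
      (fun col _ => let ⟨y, hy, hcy⟩ := hrain col; ⟨y, by simpa [N] using hy, hcy⟩)
      (by simp [hN])
  refine le_antisymm (card_le_one.mpr fun y hy y' hy' => ?_) (card_pos.mpr ?_)
  · simp only [mem_filter, mem_univ, true_and] at hy hy'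
    exact hinj (by simpa [N] using hy.1) (by simpa [N] using hy'.1) (hy.2.trans hy'.2.symm)
  · obtain ⟨y, hy⟩ := hrain col
    exact ⟨y, by simpa using hy⟩

end SimpleGraph

theorem Finset.card_filter_eq_ite_of_injOn {ι β : Type*} [DecidableEq β] {s : Finset ι}
    {f : ι → β} (hf : Set.InjOn f s) (b : β) :
    #{x ∈ s | f x = b} = if b ∈ s.image f then 1 else 0 := by
  split_ifs with hb
  · obtain ⟨x, hx, rfl⟩ := mem_image.mp hb
    refine card_eq_one.mpr ⟨x, eq_singleton_iff_unique_mem.mpr ⟨mem_filter.mpr ⟨hx, rfl⟩, ?_⟩⟩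
    exact fun y hy => hf (mem_filter.mp hy).1 hx (mem_filter.mp hy).2
  · refine card_eq_zero.mpr (filter_eq_empty_iff.mpr fun x hx hfx => hb ?_)
    exact hfx ▸ mem_image_of_mem f hx

theorem Finset.card_le_or_card_compl_le_of_dvd {ι : Type*} [Fintype ι] [DecidableEq ι]
    {a : ι → ℕ} {n k : ℕ} (hk : 1 < k) (ha : ∑ i, a i = n) {T : Finset ι}
    (hT : ∀ i, a i = 0 → k ∣ n + if i ∈ T then 1 else 0) : #T ≤ n ∨ #Tᶜ ≤ n := by
  have hle : ∀ F : Finset ι, (∀ i ∈ F, a i ≠ 0) → #F ≤ n := fun F hF =>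
    calc #F = ∑ i ∈ F, 1 := card_eq_sum_ones F
      _ ≤ ∑ i ∈ F, a i := sum_le_sum fun i hi => Nat.one_le_iff_ne_zero.mpr (hF i hi)
      _ ≤ n := ha ▸ sum_le_sum_of_subset (subset_univ F)
  by_cases hkn : k ∣ n
  · refine Or.inl (hle T fun i hi h0 => ?_)
    have := (Nat.dvd_add_right hkn).mp (if_pos hi ▸ hT i h0)
    exact absurd (Nat.le_of_dvd one_pos this) (by omega)
  · refine Or.inr (hle Tᶜ fun i hi h0 => hkn ?_)
    simpa [if_neg (mem_compl.mp hi)] using hT i h0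

theorem Nat.lt_and_add_lt_of_mul_pred_eq_mul {n s k : ℕ} (hk : 2 < k) (hn : 0 < n)
    (h : s * (k - 1) = n * k) : n < s ∧ n + s < k * (s - 1) + 1 := by
  obtain ⟨m, rfl⟩ : ∃ m, k = m + 3 := ⟨k - 3, by omega⟩
  change s * (m + 2) = n * (m + 3) at h
  have hs : 0 < s := Nat.pos_of_ne_zero fun hs => by simp [hs] at h; omega
  have hn2 : 2 ≤ n := by
    by_contra hn2
    obtain rfl : n = 1 := by omega
    rcases s with _ | _ | s <;> nlinarith
  obtain ⟨s, rfl⟩ : ∃ t, s = t + 1 := ⟨s - 1, by omega⟩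
  rw [Nat.add_sub_cancel]
  constructor <;> nlinarith

def blocksThrough [DecidableEq α] (B : Finset (Finset α)) (x : α) : Finset {b // b ∈ B} :=
  {b | x ∈ b.1}

@[simp]
theorem mem_blocksThrough [DecidableEq α] {B : Finset (Finset α)} {x : α} {b : {b // b ∈ B}} :
    b ∈ blocksThrough B x ↔ x ∈ b.1 := by
  simp [blocksThrough]

theorem IsNearParallelClass.card_mul [Fintype α] [DecidableEq α] {B P : Finset (Finset α)}
    {k : ℕ} (hP : IsNearParallelClass B P) (hB : ∀ b ∈ B, #b = k) :
    #P * k = Fintype.card α - 1 := by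
  obtain ⟨hPB, hdisj, x, hx⟩ := hP
  have hcover : P.biUnion id = univ.erase x := by
    ext y
    simp [hx]
  have hdisj' : (P : Set (Finset α)).PairwiseDisjoint id := fun b hb b' hb' hne =>
    disjoint_iff_inter_eq_empty.mpr (hdisj b hb b' hb' hne)
  rw [← card_univ, ← card_erase_of_mem (mem_univ x), ← hcover, card_biUnion hdisj']
  exact (sum_const_nat fun b hb => hB b (hPB hb)).symm

namespace IsSteiner

variable [Fintype α] [DecidableEq α] {v k : ℕ} {B : Finset (Finset α)}
  {I : Finset {b // b ∈ B}} {x₀ : α}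

theorem exists_mem_of_ne (hD : IsSteiner v k B) {x y : α} (hxy : x ≠ y) :
    ∃ b ∈ B, x ∈ b ∧ y ∈ b :=
  let ⟨b, hb⟩ := card_pos.mp (hD.2.2 x y hxy ▸ Nat.one_pos)
  ⟨b, mem_filter.mp hb⟩

theorem eq_of_mem_of_mem (hD : IsSteiner v k B) {b₁ b₂ : Finset α} (hb₁ : b₁ ∈ B)
    (hb₂ : b₂ ∈ B) {x y : α} (hxy : x ≠ y) (h₁ : x ∈ b₁ ∧ y ∈ b₁) (h₂ : x ∈ b₂ ∧ y ∈ b₂) :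
    b₁ = b₂ :=
  card_le_one.mp (hD.2.2 x y hxy).le _ (mem_filter.mpr ⟨hb₁, h₁⟩) _
    (mem_filter.mpr ⟨hb₂, h₂⟩)

theorem card_inter_le_one (hD : IsSteiner v k B) {b₁ b₂ : Finset α} (hb₁ : b₁ ∈ B)
    (hb₂ : b₂ ∈ B) (hne : b₁ ≠ b₂) : #(b₁ ∩ b₂) ≤ 1 :=
  card_le_one.mpr fun x hx y hy => by_contra fun hxy => hne <| by
    rw [mem_inter] at hx hy
    exact hD.eq_of_mem_of_mem hb₁ hb₂ hxy ⟨hx.1, hy.1⟩ ⟨hx.2, hy.2⟩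

theorem BIG_one_adj_iff (hD : IsSteiner v k B) {b b' : {b // b ∈ B}} :
    (BIG 1 B).Adj b b' ↔ b ≠ b' ∧ ¬ Disjoint b.1 b'.1 := by
  refine and_congr_right fun hne => ?_
  have := hD.card_inter_le_one b.2 b'.2 (Subtype.val_injective.ne hne)
  rw [not_disjoint_iff_nonempty_inter, ← card_pos]
  omega

theorem pairwiseDisjoint_of_indep (hD : IsSteiner v k B)
    (hI : ∀ a ∈ I, ∀ b ∈ I, ¬ (BIG 1 B).Adj a b) :
    (I : Set {b // b ∈ B}).PairwiseDisjoint Subtype.val :=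
  fun a ha b hb hne => by
    by_contra! h
    exact hI a ha b hb (hD.BIG_one_adj_iff.mpr ⟨hne, h⟩)

theorem card_blocksThrough_mul (hD : IsSteiner v k B) (x : α) :
    #(blocksThrough B x) * (k - 1) = v - 1 := by
  have hdisj : (blocksThrough B x : Set {b // b ∈ B}).PairwiseDisjoint (·.1.erase x) := by
    intro b hb b' hb' hne
    rw [mem_coe, mem_blocksThrough] at hb hb'
    refine disjoint_left.mpr fun z hz hz' => hne (Subtype.val_injective ?_)
    rw [mem_erase] at hz hz'
    exact hD.eq_of_mem_of_mem b.2 b'.2 hz.1.symm ⟨hb, hz.2⟩ ⟨hb', hz'.2⟩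
  have hcover : (blocksThrough B x).biUnion (·.1.erase x) = univ.erase x := by
    ext z
    simp only [mem_biUnion, mem_erase, mem_blocksThrough, mem_univ, and_true]
    refine ⟨fun ⟨_, _, hz, _⟩ => hz, fun hz => ?_⟩
    obtain ⟨b, hb, hxb, hzb⟩ := hD.exists_mem_of_ne (Ne.symm hz)
    exact ⟨⟨b, hb⟩, hxb, hz, hzb⟩
  calc #(blocksThrough B x) * (k - 1) = ∑ b ∈ blocksThrough B x, #(b.1.erase x) := by
        rw [sum_congr rfl fun b hb => by
          rw [card_erase_of_mem (mem_blocksThrough.mp hb), hD.2.1 _ b.2], sum_const, smul_eq_mul]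
    _ = v - 1 := by
        rw [← card_biUnion hdisj, hcover, card_erase_of_mem (mem_univ x), card_univ, hD.1]

theorem BIG_one_degree (hD : IsSteiner v k B) {s : ℕ} (hs : ∀ x, #(blocksThrough B x) = s)
    (b : {b // b ∈ B}) : (BIG 1 B).degree b = k * (s - 1) := by
  have hdisj : (b.1 : Set α).PairwiseDisjoint (fun x => (blocksThrough B x).erase b) := by
    intro x hx x' hx' hne
    refine disjoint_left.mpr fun y hy hy' => ?_
    simp only [mem_erase, mem_blocksThrough] at hy hy'
    exact hy.1 (Subtype.val_injective (hD.eq_of_mem_of_mem y.2 b.2 hne ⟨hy.2, hy'.2⟩ ⟨hx, hx'⟩))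
  have hnbhd :
      (BIG 1 B).neighborFinset b = b.1.biUnion (fun x => (blocksThrough B x).erase b) := by
    ext y
    simp only [SimpleGraph.mem_neighborFinset, hD.BIG_one_adj_iff, not_disjoint_iff, mem_biUnion,
      mem_erase, mem_blocksThrough]
    exact ⟨fun ⟨hne, x, hx, hx'⟩ => ⟨x, hx, hne.symm, hx'⟩,
      fun ⟨x, hx, hne, hx'⟩ => ⟨hne.symm, x, hx, hx'⟩⟩
  rw [← SimpleGraph.card_neighborFinset_eq_degree, hnbhd, card_biUnion hdisj,
    sum_congr rfl fun x hx => by rw [card_erase_of_mem (mem_blocksThrough.mpr hx), hs],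
    sum_const, smul_eq_mul, hD.2.1 _ b.2]

theorem isClique_blocksThrough (hD : IsSteiner v k B) (x : α) :
    (BIG 1 B).IsClique (blocksThrough B x : Set {b // b ∈ B}) := by
  intro b hb b' hb' hne
  rw [mem_coe, mem_blocksThrough] at hb hb'
  exact hD.BIG_one_adj_iff.mpr ⟨hne, not_disjoint_iff.mpr ⟨x, hb, hb'⟩⟩

theorem isNearParallelClass_of_isMaxIndep (hD : IsSteiner v k B) (hk : 1 < k)
    {P : Finset (Finset α)} (hP : IsNearParallelClass B P)
    (hI : IsMaxIndep (BIG 1 B) I) :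
    IsNearParallelClass B (I.map (Function.Embedding.subtype _)) := by
  have hdisj := hD.pairwiseDisjoint_of_indep hI.1
  have hPI : #P ≤ #I := by
    have hindep :
        ∀ a ∈ P.subtype (· ∈ B), ∀ b ∈ P.subtype (· ∈ B), ¬ (BIG 1 B).Adj a b := by
      rintro a ha b hb ⟨hne, hcard⟩
      rw [mem_subtype] at ha hb
      simp [hP.2.1 _ ha _ hb (Subtype.val_injective.ne hne)] at hcard
    simpa [card_subtype, filter_true_of_mem fun b hb => hP.1 hb] using hI.2 _ hindep
  set U := I.biUnion Subtype.val
  have hU : #U = #I * k := by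
    rw [card_biUnion hdisj, sum_const_nat fun b _ => hD.2.1 _ b.2]
  have hUv : #U = v - 1 := by
    have hPk := hD.1 ▸ hP.card_mul hD.2.1
    have hUle : #U ≤ v := hD.1 ▸ card_le_univ U
    have hIP : #I ≤ #P := Nat.le_of_lt_succ <| Nat.lt_of_mul_lt_mul_right (a := k) <|
      (hU ▸ hUle).trans_lt (by rw [Nat.succ_mul, hPk]; omega)
    rw [hU, le_antisymm hIP hPI, hPk]
  obtain ⟨x, hx⟩ : ∃ x, univ \ U = {x} := card_eq_one.mp <| by
    have hv : 0 < v := hD.1 ▸ Fintype.card_pos_iff.mpr ⟨hP.2.2.choose⟩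
    rw [card_sdiff_of_subset (subset_univ U), card_univ, hD.1, hUv]
    omega
  refine ⟨fun b hb => ?_, fun b hb b' hb' hne => ?_, x, fun y => ?_⟩
  · obtain ⟨b, -, rfl⟩ := mem_map.mp hb
    exact b.2
  · obtain ⟨b, hbI, rfl⟩ := mem_map.mp hb
    obtain ⟨b', hbI', rfl⟩ := mem_map.mp hb'
    exact disjoint_iff_inter_eq_empty.mp (hdisj hbI hbI' fun h => hne (congrArg _ h))
  · have hy : y ∈ univ \ U ↔ y = x := by rw [hx, mem_singleton]
    simp only [mem_sdiff, mem_univ, true_and, U, mem_biUnion] at hy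
    simp only [mem_map, Function.Embedding.coe_subtype, exists_exists_and_eq_and]
    rw [Ne, ← hy, not_not]

theorem card_filter_adj_of_notMem (hD : IsSteiner v k B)
    (hI : ∀ a ∈ I, ∀ b ∈ I, ¬ (BIG 1 B).Adj a b) (hcov : ∀ z, (∃ b ∈ I, z ∈ b.1) ↔ z ≠ x₀)
    {y : {b // b ∈ B}} (hy : y ∉ I) : #{b ∈ I | (BIG 1 B).Adj b y} = #(y.1.erase x₀) := by
  have hdisj : (I : Set {b // b ∈ B}).PairwiseDisjoint (fun b => y.1 ∩ b.1) :=
    (hD.pairwiseDisjoint_of_indep hI).mono fun _ => inter_subset_right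
  have hcover : I.biUnion (fun b => y.1 ∩ b.1) = y.1.erase x₀ := by
    ext z
    simp only [mem_biUnion, mem_inter, mem_erase, ← hcov z]
    exact ⟨fun ⟨b, hb, hzy, hzb⟩ => ⟨⟨b, hb, hzb⟩, hzy⟩,
      fun ⟨⟨b, hb, hzb⟩, hzy⟩ => ⟨b, hb, hzy, hzb⟩⟩
  rw [← hcover, card_biUnion hdisj, card_filter]
  refine sum_congr rfl fun b hb => ?_
  have hne : y ≠ b := fun h => hy (h ▸ hb)
  have hadj : (BIG 1 B).Adj b y ↔ #(y.1 ∩ b.1) = 1 := by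
    rw [inter_comm]
    exact and_iff_right hne.symm
  have := hD.card_inter_le_one y.2 b.2 (Subtype.val_injective.ne hne)
  simp only [hadj]
  split_ifs <;> omega

theorem card_mul_eq_of_card_closedNbhd_inter_eq_one (hD : IsSteiner v k B) (hk : 0 < k)
    (hI : ∀ a ∈ I, ∀ b ∈ I, ¬ (BIG 1 B).Adj a b) (hcov : ∀ z, (∃ b ∈ I, z ∈ b.1) ↔ z ≠ x₀)
    {S : Finset {b // b ∈ B}} (hS : ∀ b ∈ I, #{y ∈ S | y = b ∨ (BIG 1 B).Adj b y} = 1) :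
    k * #S = #I + #(S ∩ I) * (k - 1) + #(S ∩ blocksThrough B x₀) := by
  have hw : ∀ y, #{b ∈ I | y = b ∨ (BIG 1 B).Adj b y} + (if y ∈ I then k - 1 else 0)
      + (if y ∈ blocksThrough B x₀ then 1 else 0) = k := by
    intro y
    simp only [mem_blocksThrough]
    by_cases hy : y ∈ I
    · have hx₀ : x₀ ∉ y.1 := fun h => (hcov x₀).mp ⟨y, hy, h⟩ rfl
      have : {b ∈ I | y = b ∨ (BIG 1 B).Adj b y} = {y} := by
        ext b
        simp only [mem_filter, mem_singleton]
        exact ⟨fun ⟨hb, h⟩ => h.elim Eq.symm fun h => absurd h (hI b hb y hy),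
          fun h => ⟨h ▸ hy, Or.inl h.symm⟩⟩
      rw [this, card_singleton, if_pos hy, if_neg hx₀]
      omega
    · have : {b ∈ I | y = b ∨ (BIG 1 B).Adj b y} = {b ∈ I | (BIG 1 B).Adj b y} :=
        filter_congr fun b hb => or_iff_right fun h => hy (h ▸ hb)
      rw [this, hD.card_filter_adj_of_notMem hI hcov hy, if_neg hy, add_zero,
        ← hD.2.1 _ y.2]
      split_ifs with hx₀
      · exact card_erase_add_one hx₀
      · rw [erase_eq_of_notMem hx₀, add_zero]
  have hdc : ∑ y ∈ S, #{b ∈ I | y = b ∨ (BIG 1 B).Adj b y} = #I := by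
    have := sum_card_bipartiteAbove_eq_sum_card_bipartiteBelow
      (fun b y => y = b ∨ (BIG 1 B).Adj b y) (s := I) (t := S)
    simp only [bipartiteAbove, bipartiteBelow] at this
    rw [← this, sum_const_nat hS, mul_one]
  calc k * #S = ∑ y ∈ S, k := by rw [sum_const, smul_eq_mul, mul_comm]
    _ = _ := by
      rw [← sum_congr rfl fun y _ => hw y, sum_add_distrib, sum_add_distrib, hdc, sum_ite_mem,
        sum_ite_mem, sum_const, sum_const, smul_eq_mul, smul_eq_mul, mul_one]

theorem not_silverWith (hD : IsSteiner v k B) (hk : 2 < k) (hkv : k < v)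
    (hI : ∀ a ∈ I, ∀ b ∈ I, ¬ (BIG 1 B).Adj a b) (hcov : ∀ z, (∃ b ∈ I, z ∈ b.1) ↔ z ≠ x₀)
    (hIk : #I * k = v - 1) {s : ℕ} (hs : ∀ x, #(blocksThrough B x) = s) :
    ¬ SilverWith (BIG 1 B) (k * (s - 1)) I := by
  rintro ⟨c, hc, hrain⟩
  have hinj := (hD.isClique_blocksThrough x₀).injOn_of_proper hc
  set T := (blocksThrough B x₀).image c
  have hT : #T = s := by rw [card_image_of_injOn hinj, hs]
  have hclass : ∀ col, k * #{y | c y = col} =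
      #I + #{y ∈ I | c y = col} * (k - 1) + if col ∈ T then 1 else 0 := by
    intro col
    have := hD.card_mul_eq_of_card_closedNbhd_inter_eq_one (by omega) hI hcov
      (S := {y | c y = col}) fun b hb => by
        simpa [filter_filter, and_comm] using
          SimpleGraph.card_filter_closedNbhd_eq_one_of_rainbow (hD.BIG_one_degree hs b)
            (hrain b hb) col
    have hinter (t : Finset {b // b ∈ B}) :
        ({y | c y = col} : Finset _) ∩ t = {y ∈ t | c y = col} := by
      ext
      simp [and_comm]
    rwa [hinter, hinter, card_filter_eq_ite_of_injOn hinj] at this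
  have hmiss : ∀ col, #{y ∈ I | c y = col} = 0 → k ∣ #I + if col ∈ T then 1 else 0 :=
    fun col h0 => ⟨#{y | c y = col}, by rw [hclass, h0, zero_mul, add_zero]⟩
  have hsum : ∑ col, #{y ∈ I | c y = col} = #I :=
    (card_eq_sum_card_fiberwise fun y _ => mem_univ (c y)).symm
  have hn : 0 < #I := Nat.pos_of_ne_zero fun h => by rw [h, zero_mul] at hIk; omega
  have hcount := Nat.lt_and_add_lt_of_mul_pred_eq_mul (s := s) hk hn
    (by rw [← hs x₀, hD.card_blocksThrough_mul, hIk])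
  rcases card_le_or_card_compl_le_of_dvd (by omega) hsum hmiss with h | h
  · omega
  · rw [card_compl, Fintype.card_fin, hT] at h
    omega

end IsSteiner

/-- The 1-block intersection graph of an `S(2,k,v)` with a near parallel class
is not silver. -/
theorem stmt6 [Fintype α] [DecidableEq α] (v k : ℕ) (B : Finset (Finset α))
    (hk : 2 < k) (hkv : k < v) (hD : IsSteiner v k B)
    (hNPC : ∃ P : Finset (Finset α), IsNearParallelClass B P) :
    ¬ IsSilver (BIG 1 B) (k * (v - k) / (k - 1)) := by
  rintro ⟨I, hI, hsilver⟩
  obtain ⟨P, hP⟩ := hNPC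
  have hJ := hD.isNearParallelClass_of_isMaxIndep (by omega) hP hI
  have hIk : #I * k = v - 1 := by simpa [hD.1] using hJ.card_mul hD.2.1
  obtain ⟨-, -, x₀, hcov⟩ := hJ
  simp only [mem_map, Function.Embedding.coe_subtype, exists_exists_and_eq_and] at hcov
  have hs (x : α) : #(blocksThrough B x) = (v - 1) / (k - 1) :=
    Nat.eq_div_of_mul_eq_left (by omega) (hD.card_blocksThrough_mul x)
  have hr : k * (v - k) / (k - 1) = k * ((v - 1) / (k - 1) - 1) := by
    have hsk := hD.card_blocksThrough_mul x₀
    rw [hs x₀] at hsk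
    rw [show v - k = ((v - 1) / (k - 1) - 1) * (k - 1) by rw [Nat.sub_one_mul, hsk]; omega,
      ← mul_assoc, Nat.mul_div_cancel _ (by omega)]
  rw [hr] at hsilver
  exact hD.not_silverWith hk hkv hI.1 hcov hIk hs hsilver
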